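/- Let n₁, n₂, n₃ be natural numbers, not all equal, with n₁ ≥ n₂ and n₃ ≥ n₂. If n₁² + n₂² + n₃² − 3n₁n₂ − 3n₂n₃ − 3n₁n₃ + 6n₁n₃ ≤ 1, then (n₁,n₂,n₃) = (1,0,0) or (n₁,n₂,n₃) = (0,0,1). In particular one first shows that under these hypotheses 6n₁n₃ ≥ 2n₁n₂ + 2n₂n₃ + 2n₁n₃, so that q(n₁,n₂,n₃) = n₁² + n₂² + n₃² − n₁n₂ − n₂n₃ − n₃n₁ ≤ 1. -/
import Mathlib


theorem attractor_dimension_vectors (n₁ n₂ n₃ : ℕ)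
    (hne : ¬(n₁ = n₂ ∧ n₂ = n₃)) (h12 : n₂ ≤ n₁) (h32 : n₂ ≤ n₃)
    (hdim : (n₁ : ℤ) ^ 2 + (n₂ : ℤ) ^ 2 + (n₃ : ℤ) ^ 2
        - 3 * n₁ * n₂ - 3 * n₂ * n₃ - 3 * n₁ * n₃ + 6 * n₁ * n₃ ≤ 1) :
    2 * n₁ * n₂ + 2 * n₂ * n₃ + 2 * n₁ * n₃ ≤ 6 * n₁ * n₃ ∧
    (n₁ : ℤ) ^ 2 + (n₂ : ℤ) ^ 2 + (n₃ : ℤ) ^ 2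
        - n₁ * n₂ - n₂ * n₃ - n₃ * n₁ ≤ 1 ∧
    ((n₁, n₂, n₃) = (1, 0, 0) ∨ (n₁, n₂, n₃) = (0, 0, 1)) := by
  have h12' : (n₂ : ℤ) ≤ n₁ := by exact_mod_cast h12
  have h32' : (n₂ : ℤ) ≤ n₃ := by exact_mod_cast h32
  have hn1 : (0 : ℤ) ≤ n₁ := Int.natCast_nonneg _
  have hn3 : (0 : ℤ) ≤ n₃ := Int.natCast_nonneg _
  -- q ≥ 1 since not all equal
  have hq : 1 ≤ (n₁ : ℤ) ^ 2 + (n₂ : ℤ) ^ 2 + (n₃ : ℤ) ^ 2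
      - n₁ * n₂ - n₂ * n₃ - n₃ * n₁ := by
    have hne' : (n₁ : ℤ) ≠ n₂ ∨ (n₂ : ℤ) ≠ n₃ := by
      by_contra h
      push_neg at h
      exact hne ⟨by exact_mod_cast h.1, by exact_mod_cast h.2⟩
    rcases hne' with h | h
    · have h1 : 1 ≤ |(n₁ : ℤ) - n₂| := Int.one_le_abs (sub_ne_zero.mpr h)
      nlinarith [sq_abs ((n₁ : ℤ) - n₂), sq_nonneg ((n₂ : ℤ) - n₃),
        sq_nonneg ((n₁ : ℤ) - n₃), abs_nonneg ((n₁ : ℤ) - n₂)]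
    · have h1 : 1 ≤ |(n₂ : ℤ) - n₃| := Int.one_le_abs (sub_ne_zero.mpr h)
      nlinarith [sq_abs ((n₂ : ℤ) - n₃), sq_nonneg ((n₁ : ℤ) - n₂),
        sq_nonneg ((n₁ : ℤ) - n₃), abs_nonneg ((n₂ : ℤ) - n₃)]
  -- key: n₁*(n₃-n₂) = 0 and n₃*(n₁-n₂) = 0
  have key1 : (n₁ : ℤ) * (n₃ - n₂) = 0 := by
    nlinarith [mul_nonneg hn1 (sub_nonneg.mpr h32'), mul_nonneg hn3 (sub_nonneg.mpr h12')]
  have key3 : (n₃ : ℤ) * (n₁ - n₂) = 0 := by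
    nlinarith [mul_nonneg hn1 (sub_nonneg.mpr h32'), mul_nonneg hn3 (sub_nonneg.mpr h12')]
  refine ⟨?_, ?_, ?_⟩
  · have a1 : n₁ * n₂ ≤ n₁ * n₃ := Nat.mul_le_mul_left _ h32
    have a2 : n₂ * n₃ ≤ n₁ * n₃ := Nat.mul_le_mul_right _ h12
    nlinarith
  · nlinarith [mul_nonneg hn1 (sub_nonneg.mpr h32'), mul_nonneg hn3 (sub_nonneg.mpr h12')]
  · -- case analysis
    have c1 : n₁ = 0 ∨ n₃ = n₂ := by
      rcases mul_eq_zero.mp key1 with h | h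
      · left; exact_mod_cast h
      · right; have : (n₃ : ℤ) = n₂ := by linarith
        exact_mod_cast this
    have c3 : n₃ = 0 ∨ n₁ = n₂ := by
      rcases mul_eq_zero.mp key3 with h | h
      · left; exact_mod_cast h
      · right; have : (n₁ : ℤ) = n₂ := by linarith
        exact_mod_cast this
    rcases c1 with h1 | h1
    · -- n₁ = 0, so n₂ = 0, n₃² ≤ 1
      have hb : n₂ = 0 := by omega
      subst h1 hb
      have : (n₃ : ℤ) ^ 2 ≤ 1 := by nlinarith
      have : n₃ = 1 := by
        have h3 : (n₃ : ℤ) ≤ 1 := by nlinarith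
        have : n₃ ≤ 1 := by exact_mod_cast h3
        omega
      right; simp [this]
    · rcases c3 with h3 | h3
      · have hb : n₂ = 0 := by omega
        subst h3 hb
        have : (n₁ : ℤ) ^ 2 ≤ 1 := by nlinarith
        have : n₁ = 1 := by
          have h1' : (n₁ : ℤ) ≤ 1 := by nlinarith
          have : n₁ ≤ 1 := by exact_mod_cast h1'
          omega
        left; simp [this]
      · exact absurd ⟨h3, h1.symm⟩ hne
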